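/- Let n ≥ 2. The subspace of EuclideanSpace ℂ (Fin n → Fin 2) spanned by the Dicke states D_n^k for 1 ≤ k ≤ n − 1 has finrank n − 1, and every nonzero vector in this span is genuinely multipartite entangled; i.e., this span is a GES of dimension n − 1. -/

import Mathlib

/-- The unnormalized `n`-qubit Dicke state with `k` excitations. -/
noncomputable def dicke (n k : ℕ) : EuclideanSpace ℂ (Fin n → Fin 2) :=
  WithLp.toLp 2 (fun (i : Fin n → Fin 2) => if (∑ j, ((i j : ℕ))) = k then (1 : ℂ) else 0)

/-- `ψ` is biseparable across the bipartition `(S, Sᶜ)` of the `n` qubits. -/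
def Biseparable {n : ℕ} (S : Set (Fin n))
    (ψ : EuclideanSpace ℂ (Fin n → Fin 2)) : Prop :=
  ∃ (φ : ((j : S) → Fin 2) → ℂ) (χ : ((j : ↥Sᶜ) → Fin 2) → ℂ),
    ∀ i, ψ i = φ (fun j => i j.val) * χ (fun j => i j.val)

/-- A nonzero vector is genuinely multipartite entangled if it is not biseparable
across any nontrivial bipartition. -/
def GME {n : ℕ} (ψ : EuclideanSpace ℂ (Fin n → Fin 2)) : Prop :=
  ψ ≠ 0 ∧ ∀ S : Set (Fin n), S ≠ ∅ → S ≠ Set.univ → ¬ Biseparable S ψ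

/-!
Every vector of the span is a function `c` of the number of excitations with `c 0 = c n = 0`.
A product vector across `(S, Sᶜ)` is a rank-one matrix indexed by the configurations of `S` and
of `Sᶜ`; flipping a qubit `s ∈ S` and a qubit `t ∉ S` in a configuration of weight `w` exhibits
the `2 × 2` minor `c (w + 1) ^ 2 = c w * c (w + 2)`, so `c` vanishes inductively from `c 0 = 0`.
The dimension count holds because Dicke states with distinct `k ≤ n` have disjoint supports,
so they are nonzero and pairwise orthogonal.
-/

open Function

section

variable {n : ℕ}

def numExcitations (i : Fin n → Fin 2) : ℕ := ∑ j, (i j : ℕ)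

lemma numExcitations_le (i : Fin n → Fin 2) : numExcitations i ≤ n := by
  simpa [numExcitations] using
    Finset.sum_le_sum fun j (_ : j ∈ Finset.univ) => Nat.le_of_lt_succ (i j).isLt

lemma numExcitations_update_of_eq_zero {i : Fin n → Fin 2} {j : Fin n} (hj : i j = 0) :
    numExcitations (update i j 1) = numExcitations i + 1 := by
  unfold numExcitations
  rw [← Finset.add_sum_erase _ _ (Finset.mem_univ j),
    ← Finset.add_sum_erase _ _ (Finset.mem_univ j), Finset.sum_congr rfl fun x hx => by rw [update_of_ne (Finset.ne_of_mem_erase hx)]]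
  simp [hj, add_comm]

lemma exists_numExcitations_eq (T : Finset (Fin n)) {w : ℕ} (hw : w + T.card ≤ n) :
    ∃ i : Fin n → Fin 2, numExcitations i = w ∧ ∀ j ∈ T, i j = 0 := by
  classical
  obtain ⟨U, hUT, rfl⟩ := Finset.exists_subset_card_eq (s := Tᶜ) (n := w)
    (by rw [Finset.card_compl, Fintype.card_fin]; omega)
  refine ⟨fun j => if j ∈ U then 1 else 0, ?_, fun j hj => if_neg fun hjU => ?_⟩
  · simp [numExcitations, apply_ite]
  · exact Finset.mem_compl.mp (hUT hjU) hj

lemma dicke_apply (k : ℕ) (i : Fin n → Fin 2) :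
    dicke n k i = if numExcitations i = k then 1 else 0 := rfl

lemma dicke_ne_zero {k : ℕ} (hk : k ≤ n) : dicke n k ≠ 0 := by
  obtain ⟨i, hi, -⟩ := exists_numExcitations_eq (∅ : Finset (Fin n)) (w := k) (by simpa)
  intro h
  simpa [dicke_apply, hi] using congrArg (· i) h

lemma inner_dicke_of_ne {k l : ℕ} (hkl : k ≠ l) : inner ℂ (dicke n k) (dicke n l) = 0 := by
  simp only [PiLp.inner_apply, dicke_apply]
  refine Finset.sum_eq_zero fun i _ => ?_
  split_ifs <;> simp_all

variable (n) in
abbrev dickeSpan : Submodule ℂ (EuclideanSpace ℂ (Fin n → Fin 2)) :=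
  Submodule.span ℂ {ψ | ∃ k, 1 ≤ k ∧ k ≤ n - 1 ∧ ψ = dicke n k}

variable (n) in
lemma finrank_dickeSpan : Module.finrank ℂ (dickeSpan n) = n - 1 := by
  let v : Finset.Icc 1 (n - 1) → EuclideanSpace ℂ (Fin n → Fin 2) := fun k => dicke n k
  have hv : LinearIndependent ℂ v :=
    linearIndependent_of_ne_zero_of_inner_eq_zero
      (fun k => dicke_ne_zero (by have := Finset.mem_Icc.mp k.2; omega))
      fun k l hkl => inner_dicke_of_ne (Subtype.coe_injective.ne hkl)
  have hrange : {ψ | ∃ k, 1 ≤ k ∧ k ≤ n - 1 ∧ ψ = dicke n k} = Set.range v := by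
    ext ψ
    simp [v, eq_comm, and_assoc]
  rw [dickeSpan, hrange, finrank_span_eq_card hv]
  simp

lemma exists_profile_of_mem_dickeSpan {ψ : EuclideanSpace ℂ (Fin n → Fin 2)}
    (hψ : ψ ∈ dickeSpan n) :
    ∃ c : ℕ → ℂ, c 0 = 0 ∧ c n = 0 ∧ ∀ i, ψ i = c (numExcitations i) := by
  induction hψ using Submodule.span_induction with
  | mem _ hx =>
    obtain ⟨k, hk1, hkn, rfl⟩ := hx
    exact ⟨fun w => if w = k then 1 else 0, if_neg (by omega), if_neg (by omega), dicke_apply k⟩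
  | zero => exact ⟨0, rfl, rfl, fun _ => rfl⟩
  | add x y _ _ hx hy =>
    obtain ⟨c, hc0, hcn, hc⟩ := hx
    obtain ⟨d, hd0, hdn, hd⟩ := hy
    exact ⟨c + d, by simp [hc0, hd0], by simp [hcn, hdn], fun i => by simp [hc, hd]⟩
  | smul a x _ hx =>
    obtain ⟨c, hc0, hcn, hc⟩ := hx
    exact ⟨a • c, by simp [hc0], by simp [hcn], fun i => by simp [hc]⟩

lemma Biseparable.mul_eq_mul_piecewise {S : Set (Fin n)} [DecidablePred (· ∈ S)]
    {ψ : EuclideanSpace ℂ (Fin n → Fin 2)} (h : Biseparable S ψ) (i i' : Fin n → Fin 2) :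
    ψ i * ψ i' = ψ (S.piecewise i i') * ψ (S.piecewise i' i) := by
  obtain ⟨φ, χ, hψ⟩ := h
  have hSc (j : ↥Sᶜ) : j.val ∉ S := j.prop
  simp only [hψ, Set.piecewise, Subtype.prop, hSc, if_true, if_false]
  ring

lemma Biseparable.profile_sq_eq_mul {S : Set (Fin n)} {ψ : EuclideanSpace ℂ (Fin n → Fin 2)}
    (h : Biseparable S ψ) {c : ℕ → ℂ} (hc : ∀ i, ψ i = c (numExcitations i)) {s t : Fin n}
    (hs : s ∈ S) (ht : t ∉ S) {w : ℕ} (hw : w + 2 ≤ n) :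
    c (w + 1) ^ 2 = c w * c (w + 2) := by
  classical
  have hst : s ≠ t := fun e => ht (e ▸ hs)
  obtain ⟨i, hiw, hi⟩ := exists_numExcitations_eq {s, t} (w := w)
    (by rw [Finset.card_pair hst]; omega)
  have his := hi s (by simp)
  have hit := hi t (by simp)
  have hst' : update i s 1 t = 0 := by rw [update_of_ne hst.symm, hit]
  have h_left : S.piecewise i (update (update i s 1) t 1) = update i t 1 := by
    ext j
    by_cases hj : j ∈ S <;> by_cases hjt : j = t <;> by_cases hjs : j = s <;>
      simp_all [Set.piecewise]
  have h_right : S.piecewise (update (update i s 1) t 1) i = update i s 1 := by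
    ext j
    by_cases hj : j ∈ S <;> by_cases hjt : j = t <;> by_cases hjs : j = s <;>
      simp_all [Set.piecewise]
  have key := h.mul_eq_mul_piecewise i (update (update i s 1) t 1)
  rw [h_left, h_right] at key
  simp only [hc, numExcitations_update_of_eq_zero hst', numExcitations_update_of_eq_zero his,
    numExcitations_update_of_eq_zero hit, hiw] at key
  rw [sq, ← key]

lemma eq_zero_of_sq_eq_mul {M : Type*} [MonoidWithZero M] [NoZeroDivisors M] {c : ℕ → M}
    (h0 : c 0 = 0) (hc : ∀ w, w + 2 ≤ n → c (w + 1) ^ 2 = c w * c (w + 2)) :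
    ∀ w, w + 1 ≤ n → c w = 0 := by
  intro w hw
  induction w with
  | zero => exact h0
  | succ w ih =>
    exact (pow_eq_zero_iff two_ne_zero).mp <| by rw [hc w hw, ih (by omega), zero_mul]

lemma gme_of_profile {ψ : EuclideanSpace ℂ (Fin n → Fin 2)} (hψ : ψ ≠ 0) {c : ℕ → ℂ}
    (hc0 : c 0 = 0) (hcn : c n = 0) (hc : ∀ i, ψ i = c (numExcitations i)) : GME ψ := by
  refine ⟨hψ, fun S hS hSu hsep => hψ ?_⟩
  obtain ⟨s, hs⟩ := Set.nonempty_iff_ne_empty.mpr hS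
  obtain ⟨t, ht⟩ := (Set.ne_univ_iff_exists_notMem S).mp hSu
  have hc_lt := eq_zero_of_sq_eq_mul hc0 fun w hw => hsep.profile_sq_eq_mul hc hs ht hw
  ext i
  rw [hc, PiLp.zero_apply]
  rcases (numExcitations_le i).lt_or_eq with hi | hi
  · exact hc_lt _ hi
  · rw [hi, hcn]

end

theorem dicke_span_GES_general (n : ℕ) :
    Module.finrank ℂ
        ↥(Submodule.span ℂ {ψ | ∃ k, 1 ≤ k ∧ k ≤ n - 1 ∧ ψ = dicke n k}) = n - 1 ∧
    ∀ ψ ∈ Submodule.span ℂ {ψ | ∃ k, 1 ≤ k ∧ k ≤ n - 1 ∧ ψ = dicke n k},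
      ψ ≠ 0 → GME ψ := by
  refine ⟨finrank_dickeSpan n, fun ψ hψ hψ0 => ?_⟩
  obtain ⟨c, hc0, hcn, hc⟩ := exists_profile_of_mem_dickeSpan hψ
  exact gme_of_profile hψ0 hc0 hcn hc

/-- Lemma 1: the span of the Dicke states `D_n^k` for `1 ≤ k ≤ n − 1` is a GES of
dimension `n − 1`. -/
theorem dicke_span_GES (n : ℕ) (hn : 2 ≤ n) :
    Module.finrank ℂ
        ↥(Submodule.span ℂ {ψ | ∃ k, 1 ≤ k ∧ k ≤ n - 1 ∧ ψ = dicke n k}) = n - 1 ∧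
    ∀ ψ ∈ Submodule.span ℂ {ψ | ∃ k, 1 ≤ k ∧ k ≤ n - 1 ∧ ψ = dicke n k},
      ψ ≠ 0 → GME ψ :=
  dicke_span_GES_general n
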